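/- Let N, m be natural numbers, let F be any field, and let Cl : Fin m → Fin 3 → (Fin N × Bool) encode a 3-CNF formula in which the three variables of each clause are pairwise distinct. If Cl is satisfiable, then there exists a finset S : Finset I such that φ_2(S) = t and S.card = 2 + N + m. -/
import Mathlib
open Finset

section helpers
set_option linter.unusedSectionVars false
variable {α : Type*} [DecidableEq α] {R : Type*} [CommRing R]

lemma e2_support (S S₀ : Finset α) (h : S₀ ⊆ S) (f : α → R)
    (hf : ∀ e ∈ S, e ∉ S₀ → f e = 0) :
    ∑ T ∈ S.powersetCard 2, ∏ e ∈ T, f e = ∑ T ∈ S₀.powersetCard 2, ∏ e ∈ T, f e := by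
  rw [← Finset.sum_subset (Finset.powersetCard_mono h)]
  intro T hT hT0
  simp only [Finset.mem_powersetCard] at hT hT0
  obtain ⟨e, heT, heS0⟩ := Finset.not_subset.mp (fun hs => hT0 ⟨hs, hT.2⟩)
  exact Finset.prod_eq_zero heT (hf e (hT.1 heT) heS0)

lemma e2_pair (a b : α) (hab : a ≠ b) (f : α → R) :
    ∑ T ∈ ({a, b} : Finset α).powersetCard 2, ∏ e ∈ T, f e = f a * f b := by
  have hc : ({a, b} : Finset α).card = 2 := Finset.card_pair hab
  rw [show (2 : ℕ) = ({a, b} : Finset α).card from hc.symm, Finset.powersetCard_self]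
  rw [Finset.sum_singleton, Finset.prod_pair hab]

lemma e2_ones_insert (L : Finset α) (x : α) (hx : x ∉ L) (f : α → R)
    (h1 : ∀ e ∈ L, f e = 1) :
    ∑ T ∈ (insert x L).powersetCard 2, ∏ e ∈ T, f e
      = (L.card.choose 2 : R) + L.card * f x := by
  rw [show (2:ℕ) = 1+1 from rfl, Finset.powersetCard_succ_insert hx 1]
  have hdisj : Disjoint (L.powersetCard (1+1)) ((L.powersetCard 1).image (insert x)) := by
    rw [Finset.disjoint_right]
    intro T hT hT'
    simp only [Finset.mem_image, Finset.mem_powersetCard] at hT hT'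
    obtain ⟨U, hU, rfl⟩ := hT
    exact hx (hT'.1 (Finset.mem_insert_self x U))
  rw [Finset.sum_union hdisj]
  have h1' : ∀ T ∈ L.powersetCard (1+1), ∏ e ∈ T, f e = 1 := by
    intro T hT
    rw [Finset.mem_powersetCard] at hT
    exact Finset.prod_eq_one (fun e he => h1 e (hT.1 he))
  rw [Finset.sum_congr rfl h1', Finset.sum_const, Finset.card_powersetCard]
  have hinj : Set.InjOn (insert x) (L.powersetCard 1 : Set (Finset α)) := by
    intro T hT U hU hTU
    rw [Finset.mem_coe, Finset.mem_powersetCard] at hT hU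
    have hxT : x ∉ T := fun h => hx (hT.1 h)
    have hxU : x ∉ U := fun h => hx (hU.1 h)
    rw [← Finset.erase_insert hxT, ← Finset.erase_insert hxU, hTU]
  rw [Finset.sum_image hinj]
  have : ∀ T ∈ L.powersetCard 1, ∏ e ∈ insert x T, f e = f x := by
    intro T hT
    rw [Finset.mem_powersetCard] at hT
    have hxT : x ∉ T := fun h => hx (hT.1 h)
    rw [Finset.prod_insert hxT, Finset.prod_eq_one (fun e he => h1 e (hT.1 he)), mul_one]
  rw [Finset.sum_congr rfl this, Finset.sum_const, Finset.card_powersetCard]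
  simp [Nat.choose_one_right, mul_comm]

end helpers

/-- The first coordinate of the Subset-φ instance. -/
def coord0 (N m : ℕ) : Fin (1 + N + m) := ⟨0, by omega⟩

/-- The coordinate of variable `x_i`. -/
def coordVar (N m : ℕ) (i : Fin N) : Fin (1 + N + m) :=
  ⟨1 + i.val, by have := i.isLt; omega⟩

/-- The coordinate of clause `C_j`. -/
def coordCl (N m : ℕ) (j : Fin m) : Fin (1 + N + m) :=
  ⟨1 + N + j.val, by have := j.isLt; omega⟩

/-- The elements of the Subset-`φ_2` instance constructed from a 3-CNF formula `Cl`. -/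
def subsetPhi2Elem (F : Type*) [Field F] (N m : ℕ)
    (Cl : Fin m → Fin 3 → (Fin N × Bool)) :
    (Fin 2 ⊕ ((Fin N × Bool) ⊕ (Fin m × Fin 3))) → Fin (1 + N + m) → F
  | Sum.inl k, c =>
      if c = coord0 N m then 1
      else if k.val ≠ 0 ∧ ∃ i : Fin N, c = coordVar N m i then 1
      else 0
  | Sum.inr (Sum.inl (i, b)), c =>
      if c = coordVar N m i then 1
      else if ∃ j : Fin m, c = coordCl N m j ∧ ∃ k : Fin 3, Cl j k = (i, b) then 1
      else 0
  | Sum.inr (Sum.inr (j, k)), c =>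
      if c = coordCl N m j then
        (if k.val = 0 then (9 : F) else if k.val = 1 then (4 : F) else (2 : F))
      else 0

/-- The target vector of the Subset-`φ_2` instance: value 1 at coordinate 0 and at
every variable coordinate, and value 9 at every clause coordinate. -/
def subsetPhi2Target (F : Type*) [Field F] (N m : ℕ) : Fin (1 + N + m) → F :=
  fun c => if ∃ j : Fin m, c = coordCl N m j then (9 : F) else 1

section coordfacts
variable {N m : ℕ}

lemma coord0_ne_var (i : Fin N) : coord0 N m ≠ coordVar N m i := by
  simp [coord0, coordVar, Fin.ext_iff]; omega

lemma coord0_ne_cl (j : Fin m) : coord0 N m ≠ coordCl N m j := by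
  simp [coord0, coordCl, Fin.ext_iff]; omega

lemma var_ne_cl (i : Fin N) (j : Fin m) : coordVar N m i ≠ coordCl N m j := by
  simp [coordVar, coordCl, Fin.ext_iff]; have := i.isLt; omega

lemma coordVar_inj {i i' : Fin N} (h : coordVar N m i = coordVar N m i') : i = i' := by
  simp [coordVar, Fin.ext_iff] at h; exact Fin.ext h

lemma coordCl_inj {j j' : Fin m} (h : coordCl N m j = coordCl N m j') : j = j' := by
  simp [coordCl, Fin.ext_iff] at h; exact Fin.ext h

end coordfacts

/-- Completeness of the Subset-`φ_2` reduction with a cardinality count: if the 3-CNF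
formula is satisfiable, there is a witness subset `S` of size exactly `2 + N + m`
whose second elementary symmetric polynomial equals the target vector. -/
theorem subsetPhi_two_completeness_card (N m : ℕ) (F : Type*) [Field F]
    (Cl : Fin m → Fin 3 → (Fin N × Bool))
    (hdist : ∀ j : Fin m, ∀ k₁ k₂ : Fin 3, k₁ ≠ k₂ → (Cl j k₁).1 ≠ (Cl j k₂).1)
    (hsat : ∃ A : Fin N → Bool, ∀ j : Fin m, ∃ k : Fin 3, A (Cl j k).1 = (Cl j k).2) :
    ∃ S : Finset (Fin 2 ⊕ ((Fin N × Bool) ⊕ (Fin m × Fin 3))),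
      (∀ c : Fin (1 + N + m),
        ∑ T ∈ S.powersetCard 2, ∏ e ∈ T, subsetPhi2Elem F N m Cl e c =
          subsetPhi2Target F N m c) ∧
      S.card = 2 + N + m := by
  classical
  obtain ⟨A, hA⟩ := hsat
  set I' := Fin 2 ⊕ ((Fin N × Bool) ⊕ (Fin m × Fin 3)) with hI'
  set tK : Fin m → Finset (Fin 3) :=
    fun j => Finset.univ.filter (fun k => A (Cl j k).1 = (Cl j k).2) with htK
  have htK1 : ∀ j, 1 ≤ (tK j).card := by
    intro j
    obtain ⟨k, hk⟩ := hA j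
    exact Finset.card_pos.mpr ⟨k, by simp [htK, hk]⟩
  have htK3 : ∀ j, (tK j).card ≤ 3 := by
    intro j
    calc (tK j).card ≤ (Finset.univ : Finset (Fin 3)).card := Finset.card_le_card (Finset.subset_univ _)
    _ = 3 := by simp
  set kch : Fin m → Fin 3 :=
    fun j => if (tK j).card = 1 then 0 else if (tK j).card = 2 then 1 else 2 with hkch
  set S : Finset I' := ({Sum.inl 0, Sum.inl 1} : Finset I')
      ∪ Finset.univ.image (fun i : Fin N => Sum.inr (Sum.inl (i, A i)))
      ∪ Finset.univ.image (fun j : Fin m => Sum.inr (Sum.inr (j, kch j))) with hS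
  have hmemS : ∀ e : I', e ∈ S ↔
      (e = Sum.inl 0 ∨ e = Sum.inl 1) ∨ (∃ i, e = Sum.inr (Sum.inl (i, A i)))
        ∨ (∃ j, e = Sum.inr (Sum.inr (j, kch j))) := by
    intro e
    simp [hS, or_assoc, eq_comm]
  refine ⟨S, ?_, ?_⟩
  · -- the main part
    intro c
    set f : I' → F := fun e => subsetPhi2Elem F N m Cl e c with hf
    have hcases : c = coord0 N m ∨ (∃ i, c = coordVar N m i) ∨ (∃ j, c = coordCl N m j) := by
      rcases c with ⟨cv, hcv⟩
      rcases Nat.lt_or_ge cv 1 with h | h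
      · left; simp [coord0, Fin.ext_iff]; omega
      rcases Nat.lt_or_ge cv (1 + N) with h2 | h2
      · right; left; exact ⟨⟨cv - 1, by omega⟩, by simp [coordVar, Fin.ext_iff]; omega⟩
      · right; right; exact ⟨⟨cv - (1 + N), by omega⟩, by simp [coordCl, Fin.ext_iff]; omega⟩
    rcases hcases with rfl | ⟨i, rfl⟩ | ⟨j, rfl⟩
    · -- c = coord0
      have hsub : ({Sum.inl 0, Sum.inl 1} : Finset I') ⊆ S := by
        intro e he; rw [hmemS]; simp at he; tauto
      rw [e2_support S _ hsub f ?_, e2_pair _ _ (fun h => by injection h with h'; exact absurd h' (by decide)) f]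
      · have h0 : f (Sum.inl 0) = 1 := by simp [hf, subsetPhi2Elem]
        have h1 : f (Sum.inl 1) = 1 := by simp [hf, subsetPhi2Elem]
        rw [h0, h1, subsetPhi2Target, if_neg (by push_neg; exact fun j => coord0_ne_cl j), mul_one]
      · intro e heS heS0
        rw [hmemS] at heS
        simp only [Finset.mem_insert, Finset.mem_singleton] at heS0
        rcases heS with (rfl | rfl) | ⟨i, rfl⟩ | ⟨j, rfl⟩
        · exact absurd (Or.inl rfl) heS0
        · exact absurd (Or.inr rfl) heS0
        · simp [hf, subsetPhi2Elem, (coord0_ne_var i),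
            fun j => coord0_ne_cl (N := N) (m := m) j]
        · simp [hf, subsetPhi2Elem, coord0_ne_cl j]
    · -- c = coordVar i
      have hsub : ({Sum.inl 1, Sum.inr (Sum.inl (i, A i))} : Finset I') ⊆ S := by
        intro e he; rw [hmemS]; simp at he
        rcases he with rfl | rfl
        · tauto
        · exact Or.inr (Or.inl ⟨i, rfl⟩)
      rw [e2_support S _ hsub f ?_, e2_pair _ _ (by simp) f]
      · have h0 : f (Sum.inl 1) = 1 := by
          simp [hf, subsetPhi2Elem, (coord0_ne_var i).symm]
        have h1 : f (Sum.inr (Sum.inl (i, A i))) = 1 := by simp [hf, subsetPhi2Elem]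
        rw [h0, h1, subsetPhi2Target, if_neg (by push_neg; exact fun j => var_ne_cl i j), mul_one]
      · intro e heS heS0
        rw [hmemS] at heS
        simp only [Finset.mem_insert, Finset.mem_singleton] at heS0
        rcases heS with (rfl | rfl) | ⟨i', rfl⟩ | ⟨j, rfl⟩
        · simp [hf, subsetPhi2Elem, (coord0_ne_var i).symm]
        · exact absurd (Or.inl rfl) heS0
        · have hii' : i ≠ i' := by
            rintro rfl; exact heS0 (Or.inr rfl)
          have hne : coordVar N m i ≠ coordVar N m i' := fun h => hii' (coordVar_inj h)
          simp [hf, subsetPhi2Elem, hne, fun j => var_ne_cl (N := N) (m := m) i j]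
        · simp [hf, subsetPhi2Elem, var_ne_cl i j]
    · -- c = coordCl j
      set L : Finset I' :=
        (tK j).image (fun k => Sum.inr (Sum.inl ((Cl j k).1, (Cl j k).2))) with hL
      set x : I' := Sum.inr (Sum.inr (j, kch j)) with hx
      have hxL : x ∉ L := by
        rw [hL, hx]
        intro hmem
        obtain ⟨k, -, hk⟩ := Finset.mem_image.mp hmem
        injection hk with hk2
        injection hk2
      have hLcard : L.card = (tK j).card := by
        rw [hL, Finset.card_image_of_injOn]
        intro k hk k' hk' hkk'
        injection hkk' with h1
        injection h1 with h2
        by_contra hne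
        exact hdist j k k' hne (congrArg Prod.fst h2)
      have hsub : insert x L ⊆ S := by
        intro e he
        rw [Finset.mem_insert] at he
        rw [hmemS]
        rcases he with rfl | he
        · exact Or.inr (Or.inr ⟨j, rfl⟩)
        · rw [hL, Finset.mem_image] at he
          obtain ⟨k, hk, rfl⟩ := he
          rw [htK, Finset.mem_filter] at hk
          exact Or.inr (Or.inl ⟨(Cl j k).1, by rw [hk.2]⟩)
      rw [e2_support S _ hsub f ?_, e2_ones_insert L x hxL f ?_]
      · -- compute the value
        have hfx : f x = (if (kch j).val = 0 then (9:F) else if (kch j).val = 1 then 4 else 2) := by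
          simp [hf, hx, subsetPhi2Elem]
        have htgt : subsetPhi2Target F N m (coordCl N m j) = 9 := by
          rw [subsetPhi2Target, if_pos ⟨j, rfl⟩]
        rw [htgt, hfx, hLcard]
        obtain h | h | h : (tK j).card = 1 ∨ (tK j).card = 2 ∨ (tK j).card = 3 := by
          have h1 := htK1 j; have h3 := htK3 j; omega
        · rw [h]; simp [hkch, h]
        · rw [h]; simp [hkch, h]; norm_num
        · rw [h]; simp [hkch, h]; norm_num
      · -- all elements of L have value 1
        intro e he
        rw [hL, Finset.mem_image] at he
        obtain ⟨k, hk, rfl⟩ := he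
        simp only [hf, subsetPhi2Elem]
        rw [if_neg (var_ne_cl _ j).symm, if_pos ⟨j, rfl, k, rfl⟩]
      · -- everything else vanishes
        intro e heS heS0
        rw [hmemS] at heS
        rcases heS with (rfl | rfl) | ⟨i', rfl⟩ | ⟨j', rfl⟩
        · simp [hf, subsetPhi2Elem, (coord0_ne_cl j).symm,
            fun i => (var_ne_cl (N := N) (m := m) i j).symm]
        · simp [hf, subsetPhi2Elem, (coord0_ne_cl j).symm,
            fun i => (var_ne_cl (N := N) (m := m) i j).symm]
        · -- literal element not in L
          simp only [hf, subsetPhi2Elem]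
          rw [if_neg (var_ne_cl i' j).symm, if_neg]
          rintro ⟨j'', hj'', k, hk⟩
          have : j'' = j := (coordCl_inj hj'').symm
          subst this
          apply heS0
          rw [Finset.mem_insert]
          right
          rw [hL, Finset.mem_image]
          refine ⟨k, ?_, by rw [hk]⟩
          rw [htK, Finset.mem_filter]
          exact ⟨Finset.mem_univ k, by rw [hk]⟩
        · -- gadget of another clause
          have hjj' : j' ≠ j := by
            rintro rfl; exact heS0 (Finset.mem_insert_self x L)
          simp only [hf, subsetPhi2Elem]
          rw [if_neg (fun h => hjj' (coordCl_inj h).symm)]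
  · -- cardinality
    rw [hS]
    rw [Finset.card_union_of_disjoint, Finset.card_union_of_disjoint]
    · rw [Finset.card_image_of_injective _ (fun a b h => by simp only [Sum.inr.injEq, Sum.inl.injEq, Prod.mk.injEq] at h; exact h.1),
        Finset.card_image_of_injective _ (fun a b h => by simp only [Sum.inr.injEq, Prod.mk.injEq] at h; exact h.1)]
      simp
    · simp [Finset.disjoint_left]
    · simp [Finset.disjoint_left]
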